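/- Suppose |ξ(x,t)| ≤ max{0, 1 − c·dist²(x, ∂𝒜(t))} for a constant c > 0. Then for every x and t, c·min{dist²(x, ∂𝒜(t)), 1/c} ≤ 1 − |ξ(x,t)| ≤ 2(1 − n·ξ(x,t)) for any unit vector n; hence ∫ σ min{dist²(·,∂𝒜(t)), 1} d|∇χ_{A(t)}| ≤ C E_rel[u_A|u_𝒜](t) for a constant C depending on c. -/

import Mathlib

/-!
Writing `d` for the distance to the interface, the decay bound on the calibration gives
`c min{d², 1/c} = min{c d², 1} ≤ 1 - ‖ξ‖`, and `n·ξ ≤ ‖ξ‖ ≤ 1` gives `1 - ‖ξ‖ ≤ 2(1 - n·ξ)`.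
Since `min{d², 1} ≤ max{1, c} min{d², 1/c}`, the integrand `σ min{d², 1}` is pointwise at most
`2 max{1, c}/c · σ (1 - n_A·ξ)`, and integrating gives the coercivity estimate.
-/

open MeasureTheory

section Calibration

lemma min_le_max_one_mul_min_one_div {a c : ℝ} (hc : 0 < c) (ha : 0 ≤ a) :
    min a 1 ≤ max 1 c * min a (1 / c) := by
  have hM : 1 ≤ max 1 c := le_max_left 1 c
  calc min a 1 ≤ min (max 1 c * a) (max 1 c * (1 / c)) := by
        refine min_le_min (le_mul_of_one_le_left ha hM) ?_
        rw [mul_one_div, le_div_iff₀ hc, one_mul]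
        exact le_max_right 1 c
    _ = max 1 c * min a (1 / c) := (mul_min_of_nonneg _ _ (zero_le_one.trans hM)).symm

lemma mul_min_one_div_le_one_sub {a c s : ℝ} (hc : 0 < c) (hs : s ≤ max 0 (1 - c * a)) :
    c * min a (1 / c) ≤ 1 - s := by
  rw [mul_min_of_nonneg _ _ hc.le, mul_one_div_cancel hc.ne']
  rcases le_total (c * a) 1 with h | h
  · rw [max_eq_right (by linarith)] at hs
    rw [min_eq_left h]
    linarith
  · rw [max_eq_left (by linarith)] at hs
    rw [min_eq_right h]
    linarith

lemma le_one_of_le_max_zero_one_sub {a c s : ℝ} (hc : 0 ≤ c) (ha : 0 ≤ a)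
    (hs : s ≤ max 0 (1 - c * a)) : s ≤ 1 :=
  hs.trans (max_le zero_le_one (sub_le_self 1 (mul_nonneg hc ha)))

variable {E : Type*} [NormedAddCommGroup E] [InnerProductSpace ℝ E]

lemma one_sub_norm_le_two_mul_one_sub_inner {n v : E} (hn : ‖n‖ ≤ 1) (hv : ‖v‖ ≤ 1) :
    1 - ‖v‖ ≤ 2 * (1 - inner ℝ n v) := by
  have : inner ℝ n v ≤ ‖v‖ :=
    (real_inner_le_norm n v).trans (mul_le_of_le_one_left (norm_nonneg v) hn)
  linarith

lemma norm_one_sub_inner_le_two {n v : E} (hn : ‖n‖ ≤ 1) (hv : ‖v‖ ≤ 1) :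
    ‖1 - inner ℝ n v‖ ≤ 2 := by
  have : |inner ℝ n v| ≤ 1 :=
    (abs_real_inner_le_norm n v).trans (mul_le_one₀ hn (norm_nonneg v) hv)
  rw [Real.norm_eq_abs, abs_le] at *
  constructor <;> linarith

lemma min_le_mul_one_sub_inner {a c : ℝ} {n v : E} (hc : 0 < c) (ha : 0 ≤ a)
    (hv : ‖v‖ ≤ max 0 (1 - c * a)) (hn : ‖n‖ ≤ 1) :
    min a 1 ≤ 2 * max 1 c / c * (1 - inner ℝ n v) := by
  have hcoer := mul_min_one_div_le_one_sub hc hv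
  have hv1 := le_one_of_le_max_zero_one_sub hc.le ha hv
  have hM : 0 ≤ max 1 c / c := by positivity
  calc min a 1 ≤ max 1 c * min a (1 / c) := min_le_max_one_mul_min_one_div hc ha
    _ = max 1 c / c * (c * min a (1 / c)) := by field_simp
    _ ≤ max 1 c / c * (1 - ‖v‖) := mul_le_mul_of_nonneg_left hcoer hM
    _ ≤ max 1 c / c * (2 * (1 - inner ℝ n v)) :=
        mul_le_mul_of_nonneg_left (one_sub_norm_le_two_mul_one_sub_inner hn hv1) hM
    _ = 2 * max 1 c / c * (1 - inner ℝ n v) := by ring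

end Calibration

theorem stmt_15_general {N : ℕ} (c : ℝ) (hc : 0 < c)
    (Γ : ℝ → Set (EuclideanSpace ℝ (Fin N)))
    (ξ : EuclideanSpace ℝ (Fin N) → ℝ → EuclideanSpace ℝ (Fin N))
    (hξ : ∀ x t, ‖ξ x t‖ ≤ max 0 (1 - c * (Metric.infDist x (Γ t)) ^ 2))
    (hξm : ∀ t, Measurable (fun x => ξ x t))
    (σ : EuclideanSpace ℝ (Fin N) → ℝ) (δ Cδ : ℝ) (hδ : 0 < δ)
    (hσ : Continuous σ) (hσb : ∀ x, δ ≤ σ x ∧ σ x ≤ Cδ)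
    (P : ℝ → Measure (EuclideanSpace ℝ (Fin N))) (hP : ∀ t, IsFiniteMeasure (P t))
    (nA : ℝ → EuclideanSpace ℝ (Fin N) → EuclideanSpace ℝ (Fin N))
    (hnAm : ∀ t, Measurable (nA t)) (hnA1 : ∀ t, ∀ᵐ x ∂(P t), ‖nA t x‖ = 1) :
    (∀ x t, ∀ n : EuclideanSpace ℝ (Fin N), ‖n‖ = 1 →
        c * min ((Metric.infDist x (Γ t)) ^ 2) (1 / c) ≤ 1 - ‖ξ x t‖ ∧
          1 - ‖ξ x t‖ ≤ 2 * (1 - (inner ℝ n (ξ x t) : ℝ))) ∧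
      ∃ C > 0, ∀ t,
        (∫ x, σ x * min ((Metric.infDist x (Γ t)) ^ 2) 1 ∂(P t)) ≤
          C * ∫ x, σ x * (1 - (inner ℝ (nA t x) (ξ x t) : ℝ)) ∂(P t) := by
  have hξ1 : ∀ x t, ‖ξ x t‖ ≤ 1 := fun x t =>
    le_one_of_le_max_zero_one_sub hc.le (sq_nonneg _) (hξ x t)
  have hσ0 : ∀ x, 0 ≤ σ x := fun x => hδ.le.trans (hσb x).1
  refine ⟨fun x t n hn => ⟨mul_min_one_div_le_one_sub hc (hξ x t),
    one_sub_norm_le_two_mul_one_sub_inner hn.le (hξ1 x t)⟩, 2 * max 1 c / c, by positivity,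
    fun t => ?_⟩
  have : IsFiniteMeasure (P t) := hP t
  have hint : Integrable (fun x => σ x * (1 - inner ℝ (nA t x) (ξ x t))) (P t) := by
    refine .of_bound (hσ.measurable.mul (measurable_const.sub
      ((hnAm t).inner (hξm t)))).aestronglyMeasurable (Cδ * 2) ?_
    filter_upwards [hnA1 t] with x hx
    rw [norm_mul, Real.norm_of_nonneg (hσ0 x)]
    exact mul_le_mul (hσb x).2 (norm_one_sub_inner_le_two hx.le (hξ1 x t)) (norm_nonneg _)
      ((hσ0 x).trans (hσb x).2)
  calc (∫ x, σ x * min ((Metric.infDist x (Γ t)) ^ 2) 1 ∂(P t))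
      ≤ ∫ x, 2 * max 1 c / c * (σ x * (1 - inner ℝ (nA t x) (ξ x t))) ∂(P t) := by
        refine integral_mono_of_nonneg (.of_forall fun x => mul_nonneg (hσ0 x) (by positivity))
          (hint.const_mul _) ?_
        filter_upwards [hnA1 t] with x hx
        rw [mul_left_comm]
        exact mul_le_mul_of_nonneg_left
          (min_le_mul_one_sub_inner hc (sq_nonneg _) (hξ x t) hx.le) (hσ0 x)
    _ = 2 * max 1 c / c * ∫ x, σ x * (1 - inner ℝ (nA t x) (ξ x t)) ∂(P t) :=
        integral_const_mul _ _

/-- Coercivity of the relative energy with respect to the squared distance to the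
interface: if `‖ξ(x,t)‖ ≤ max{0, 1 − c dist²(x, ∂𝒜(t))}`, then pointwise
`c min{dist², 1/c} ≤ 1 − ‖ξ‖ ≤ 2(1 − n·ξ)` for any unit vector `n`, and
`∫ σ min{dist²(·,∂𝒜(t)), 1} d|∇χ_{A(t)}| ≤ C E_rel[u_A|u_𝒜](t)`. -/
theorem stmt_15 {N : ℕ} (c : ℝ) (hc : 0 < c)
    (Γ : ℝ → Set (EuclideanSpace ℝ (Fin N))) (hΓ : ∀ t, (Γ t).Nonempty)
    (ξ : EuclideanSpace ℝ (Fin N) → ℝ → EuclideanSpace ℝ (Fin N))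
    (hξ : ∀ x t, ‖ξ x t‖ ≤ max 0 (1 - c * (Metric.infDist x (Γ t)) ^ 2))
    (hξm : ∀ t, Measurable (fun x => ξ x t))
    (σ : EuclideanSpace ℝ (Fin N) → ℝ) (δ Cδ : ℝ) (hδ : 0 < δ)
    (hσ : Continuous σ) (hσb : ∀ x, δ ≤ σ x ∧ σ x ≤ Cδ)
    (P : ℝ → Measure (EuclideanSpace ℝ (Fin N))) (hP : ∀ t, IsFiniteMeasure (P t))
    (nA : ℝ → EuclideanSpace ℝ (Fin N) → EuclideanSpace ℝ (Fin N))
    (hnAm : ∀ t, Measurable (nA t)) (hnA1 : ∀ t, ∀ᵐ x ∂(P t), ‖nA t x‖ = 1) :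
    (∀ x t, ∀ n : EuclideanSpace ℝ (Fin N), ‖n‖ = 1 →
        c * min ((Metric.infDist x (Γ t)) ^ 2) (1 / c) ≤ 1 - ‖ξ x t‖ ∧
          1 - ‖ξ x t‖ ≤ 2 * (1 - (inner ℝ n (ξ x t) : ℝ))) ∧
      ∃ C > 0, ∀ t,
        (∫ x, σ x * min ((Metric.infDist x (Γ t)) ^ 2) 1 ∂(P t)) ≤
          C * ∫ x, σ x * (1 - (inner ℝ (nA t x) (ξ x t) : ℝ)) ∂(P t) :=
  stmt_15_general c hc Γ ξ hξ hξm σ δ Cδ hδ hσ hσb P hP nA hnAm hnA1
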